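/- arXiv:2305.08404 — 2 statements merged into one kernel-verified Lean document; each statement's English description precedes it below -/
import Mathlib

section
/- Let d ≥ 1 and X = [0,1]^{4d}. There do not exist functions g₁ : ℝ^{2d} → ℝ and g₂ : ℝ^{2d} → ℝ such that for all x ∈ X, |g₁(x₁,…,x_{2d}) + g₂(x_{2d+1},…,x_{4d}) − x₁·x_{2d+1}| ≤ 1/8. Consequently, the uniform approximation error of any such additively-separable function to the target h*(x) = x₁·x_{2d+1} on X is at least 1/8. -/
/-!
A separable function `f a + g b` has vanishing mixed difference over the corners of the unit
square, whereas `a * b` has mixed difference `1` there; hence one of the four corner errors is at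
least `1 / 4`. Moving only the coordinates `x₁` and `x_{2d+1}` reduces the theorem to this.
-/

theorem one_div_four_le_of_abs_add_sub_mul_le {f g : ℝ → ℝ} {ε : ℝ}
    (h : ∀ a ∈ ({0, 1} : Set ℝ), ∀ b ∈ ({0, 1} : Set ℝ), |f a + g b - a * b| ≤ ε) :
    1 / 4 ≤ ε := by
  have h00 := abs_le.mp (h 0 (by simp) 0 (by simp))
  have h01 := abs_le.mp (h 0 (by simp) 1 (by simp))
  have h10 := abs_le.mp (h 1 (by simp) 0 (by simp))
  have h11 := abs_le.mp (h 1 (by simp) 1 (by simp))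
  linarith [h00.1, h01.2, h10.2, h11.1]

/-- No additively-separable function `g₁(x₁,…,x_{2d}) + g₂(x_{2d+1},…,x_{4d})` can
uniformly approximate `h*(x) = x₁ · x_{2d+1}` on `[0,1]^{4d}` within `1/8`. -/
theorem no_separable_approx_long_range (d : ℕ) (hd : 1 ≤ d) :
    ¬ ∃ (g₁ g₂ : (Fin (2 * d) → ℝ) → ℝ),
      ∀ x : Fin (4 * d) → ℝ, (∀ i, x i ∈ Set.Icc (0 : ℝ) 1) →
        |g₁ (fun i => x ⟨i.1, by have := i.isLt; omega⟩)
          + g₂ (fun i => x ⟨2 * d + i.1, by have := i.isLt; omega⟩)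
          - x ⟨0, by omega⟩ * x ⟨2 * d, by omega⟩| ≤ 1 / 8 := by
  rintro ⟨g₁, g₂, h⟩
  have hd₀ : 2 * d ≠ 0 := by omega
  let firstAxis (a : ℝ) : Fin (2 * d) → ℝ := fun i => if i.1 = 0 then a else 0
  suffices hcorner : ∀ a ∈ ({0, 1} : Set ℝ), ∀ b ∈ ({0, 1} : Set ℝ),
      |g₁ (firstAxis a) + g₂ (firstAxis b) - a * b| ≤ 1 / 8 by
    linarith [one_div_four_le_of_abs_add_sub_mul_le hcorner]
  intro a ha b hb
  have hunit : ∀ c ∈ ({0, 1} : Set ℝ), c ∈ Set.Icc (0 : ℝ) 1 := by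
    rintro c (rfl | rfl) <;> norm_num
  have hx := h (fun j => if j.1 = 0 then a else if j.1 = 2 * d then b else 0) (fun j => by
    split_ifs
    exacts [hunit a ha, hunit b hb, by norm_num])
  convert hx using 5 <;> simp [firstAxis, hd₀]
  ext i
  simp [i.isLt.ne]
end

section
/- For every integer d ≥ 1, 2^d / (∑_{k=0}^{⌊d/4⌋} C(d,k)) ≥ (2 / (5e)^{1/4})^d. In particular, the Hamming cube {0,1}^d admits a packing at mutual distance greater than d/4 of cardinality at least (2/(5e)^{1/4})^d, and 2/(5e)^{1/4} > 1. -/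
/-! A maximal family of binary words at pairwise Hamming distance `> m` is also a covering: every
word lies within distance `m` of a member, so the family has at least `2^d / ∑_{k ≤ m} C(d,k)`
elements (Gilbert–Varshamov). For the tail sum, comparing with the binomial expansion of
`(1/3 + 1)^d` gives `∑_{k ≤ m} C(d,k) ≤ 3^m (4/3)^d`, and for `m = ⌊d/4⌋` this is at most
`(5e)^{d/4}` because `3 (4/3)^4 = 256/27 ≤ 5e`; finally `5e < 16 = 2^4`. -/

open Finset

theorem Finset.exists_maximal_pairwise {α : Type*} [Fintype α] (r : α → α → Prop) [Std.Symm r] :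
    ∃ S : Finset α, (S : Set α).Pairwise r ∧ ∀ y ∉ S, ∃ x ∈ S, ¬ r x y := by
  classical
  obtain ⟨S, hS, hmax⟩ := exists_max_image (univ.filter fun S : Finset α => (S : Set α).Pairwise r)
    card ⟨∅, by simp⟩
  rw [mem_filter] at hS
  refine ⟨S, hS.2, fun y hy => ?_⟩
  by_contra! hfar
  have hins : ((insert y S : Finset α) : Set α).Pairwise r := by
    rw [coe_insert, Set.pairwise_insert_of_symm_of_notMem (by simpa using hy)]
    exact ⟨hS.2, fun x hx => Std.Symm.symm _ _ (hfar x hx)⟩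
  have := hmax _ (mem_filter.2 ⟨mem_univ _, hins⟩)
  rw [card_insert_of_notMem hy] at this
  omega

section Hamming

variable {ι : Type*} [Fintype ι] [DecidableEq ι]

def hammingBall {β : ι → Type*} [∀ i, Fintype (β i)] [∀ i, DecidableEq (β i)]
    (x : ∀ i, β i) (m : ℕ) : Finset (∀ i, β i) :=
  univ.filter fun y => hammingDist x y ≤ m

theorem card_hammingBall_le (x : ι → Bool) (m : ℕ) :
    (hammingBall x m).card ≤ ∑ k ∈ range (m + 1), (Fintype.card ι).choose k := by
  let diff : (ι → Bool) → Finset ι := fun y => univ.filter fun i => x i ≠ y i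
  have hdiff : Function.LeftInverse (fun s i => xor (x i) (decide (i ∈ s))) diff := by
    intro y
    funext i
    cases hx : x i <;> cases hy : y i <;> simp [diff, hx, hy]
  calc (hammingBall x m).card
      ≤ ((range (m + 1)).sigma fun k => powersetCard k (univ : Finset ι)).card := by
        refine card_le_card_of_injOn (fun y => ⟨hammingDist x y, diff y⟩) (fun y hy => ?_)
          (fun y _ z _ h => hdiff.injective (Sigma.mk.inj_iff.1 h).2.eq)
        exact mem_sigma.2 ⟨mem_range.2 (Nat.lt_succ_of_le (mem_filter.1 hy).2),
          mem_powersetCard.2 ⟨subset_univ _, rfl⟩⟩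
    _ = ∑ k ∈ range (m + 1), (Fintype.card ι).choose k := by simp [card_sigma]

theorem exists_hammingDist_packing (m : ℕ) :
    ∃ S : Finset (ι → Bool), (S : Set (ι → Bool)).Pairwise (fun x y => m < hammingDist x y) ∧
      2 ^ Fintype.card ι ≤ S.card * ∑ k ∈ range (m + 1), (Fintype.card ι).choose k := by
  have : Std.Symm fun x y : ι → Bool => m < hammingDist x y :=
    ⟨fun x y h => hammingDist_comm x y ▸ h⟩
  obtain ⟨S, hS, hcov⟩ := exists_maximal_pairwise fun x y : ι → Bool => m < hammingDist x y
  have hcover : univ ⊆ S.biUnion (hammingBall · m) := fun y _ => by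
    by_cases hy : y ∈ S
    · exact mem_biUnion.2 ⟨y, hy, by simp [hammingBall]⟩
    · obtain ⟨x, hx, hxy⟩ := hcov y hy
      exact mem_biUnion.2 ⟨x, hx, by simpa [hammingBall] using hxy⟩
  refine ⟨S, hS, ?_⟩
  calc 2 ^ Fintype.card ι = (univ : Finset (ι → Bool)).card := by simp
    _ ≤ (S.biUnion (hammingBall · m)).card := card_le_card hcover
    _ ≤ _ := card_biUnion_le_card_mul _ _ _ fun x _ => card_hammingBall_le x m

end Hamming

theorem sum_range_choose_le_add_pow_div {d m : ℕ} (hm : m ≤ d) {t : ℝ} (ht₀ : 0 < t)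
    (ht₁ : t ≤ 1) :
    ∑ k ∈ range (m + 1), (d.choose k : ℝ) ≤ (t + 1) ^ d / t ^ m := by
  rw [le_div_iff₀ (pow_pos ht₀ m), sum_mul, add_pow]
  calc ∑ k ∈ range (m + 1), (d.choose k : ℝ) * t ^ m
      ≤ ∑ k ∈ range (m + 1), t ^ k * 1 ^ (d - k) * d.choose k := by
        refine sum_le_sum fun k hk => ?_
        rw [one_pow, mul_one, mul_comm]
        exact mul_le_mul_of_nonneg_right
          (pow_le_pow_of_le_one ht₀.le ht₁ (Nat.le_of_lt_succ (mem_range.1 hk))) (by positivity)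
    _ ≤ ∑ k ∈ range (d + 1), t ^ k * 1 ^ (d - k) * d.choose k :=
        sum_le_sum_of_subset_of_nonneg (range_subset_range.2 (by omega))
          fun _ _ _ => by positivity

theorem pow_mul_pow_le_pow {R : Type*} [CommSemiring R] [PartialOrder R] [IsOrderedRing R]
    {a b c : R} {k m d : ℕ} (ha : 0 ≤ a) (hac : a ≤ c) (hb : 0 ≤ b) (hbac : b * a ^ k ≤ c ^ k)
    (hkm : k * m ≤ d) : b ^ m * a ^ d ≤ c ^ d := by
  obtain ⟨r, rfl⟩ := Nat.exists_eq_add_of_le hkm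
  calc b ^ m * a ^ (k * m + r) = (b * a ^ k) ^ m * a ^ r := by ring
    _ ≤ (c ^ k) ^ m * c ^ r := by
      gcongr
      exact pow_nonneg (pow_nonneg (ha.trans hac) k) m
    _ = c ^ (k * m + r) := by ring

theorem rpow_one_div_four_pow_four {x : ℝ} (hx : 0 ≤ x) : (x ^ ((1 : ℝ) / 4)) ^ 4 = x := by
  rw [one_div]
  exact_mod_cast Real.rpow_inv_natCast_pow (n := 4) hx (by norm_num)

theorem sum_range_choose_quarter_le (d : ℕ) :
    ∑ k ∈ range (d / 4 + 1), (d.choose k : ℝ) ≤ ((5 * Real.exp 1) ^ ((1 : ℝ) / 4)) ^ d := by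
  set c := (5 * Real.exp 1) ^ ((1 : ℝ) / 4)
  have hc : c ^ 4 = 5 * Real.exp 1 := rpow_one_div_four_pow_four (by positivity)
  have he : (2.7 : ℝ) < Real.exp 1 := lt_trans (by norm_num) Real.exp_one_gt_d9
  have hc_ge : 4 / 3 ≤ c := by
    rw [← pow_le_pow_iff_left₀ (by norm_num) (by positivity) four_ne_zero, hc]
    linarith
  calc ∑ k ∈ range (d / 4 + 1), (d.choose k : ℝ)
      ≤ (1 / 3 + 1) ^ d / (1 / 3) ^ (d / 4) :=
        sum_range_choose_le_add_pow_div (Nat.div_le_self d 4) (by norm_num) (by norm_num)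
    _ = 3 ^ (d / 4) * (4 / 3) ^ d := by field_simp; rw [← mul_pow]; norm_num
    _ ≤ c ^ d := pow_mul_pow_le_pow (by norm_num) hc_ge (by norm_num) (by rw [hc]; linarith)
        (Nat.mul_div_le d 4)

theorem hamming_quarter_packing_general (d : ℕ) :
    ((2 / (5 * Real.exp 1) ^ ((1 : ℝ) / 4)) ^ d
        ≤ (2 : ℝ) ^ d / ∑ k ∈ Finset.range (d / 4 + 1), (d.choose k : ℝ)) ∧
    (∃ S : Finset (Fin d → Bool),
        (∀ x ∈ S, ∀ y ∈ S, x ≠ y → d / 4 < hammingDist x y) ∧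
        (2 / (5 * Real.exp 1) ^ ((1 : ℝ) / 4)) ^ d ≤ (S.card : ℝ)) ∧
    1 < 2 / (5 * Real.exp 1) ^ ((1 : ℝ) / 4) := by
  have hsum_pos : 0 < ∑ k ∈ range (d / 4 + 1), (d.choose k : ℝ) :=
    sum_pos' (fun _ _ => by positivity) ⟨0, by simp⟩
  have hbound : (2 / (5 * Real.exp 1) ^ ((1 : ℝ) / 4)) ^ d
      ≤ (2 : ℝ) ^ d / ∑ k ∈ range (d / 4 + 1), (d.choose k : ℝ) := by
    rw [div_pow]
    exact div_le_div_of_nonneg_left (by positivity) hsum_pos (sum_range_choose_quarter_le d)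
  obtain ⟨S, hS, hcard⟩ := exists_hammingDist_packing (ι := Fin d) (d / 4)
  rw [Fintype.card_fin] at hcard
  refine ⟨hbound, ⟨S, fun x hx y hy => hS hx hy, hbound.trans ?_⟩, ?_⟩
  · rw [div_le_iff₀ hsum_pos]
    exact_mod_cast hcard
  · rw [one_lt_div (by positivity), ← pow_lt_pow_iff_left₀ (by positivity) (by norm_num)
      four_ne_zero, rpow_one_div_four_pow_four (by positivity)]
    linarith [Real.exp_one_lt_d9]

/-- For every `d ≥ 1`, `2^d / ∑_{k ≤ ⌊d/4⌋} C(d,k) ≥ (2/(5e)^{1/4})^d`; in particular the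
Hamming cube `{0,1}^d` admits a packing at mutual distance greater than `⌊d/4⌋` of
cardinality at least `(2/(5e)^{1/4})^d`, and `2/(5e)^{1/4} > 1`. -/
theorem hamming_quarter_packing (d : ℕ) (hd : 1 ≤ d) :
    ((2 / (5 * Real.exp 1) ^ ((1 : ℝ) / 4)) ^ d
        ≤ (2 : ℝ) ^ d / ∑ k ∈ Finset.range (d / 4 + 1), (d.choose k : ℝ)) ∧
    (∃ S : Finset (Fin d → Bool),
        (∀ x ∈ S, ∀ y ∈ S, x ≠ y → d / 4 < hammingDist x y) ∧
        (2 / (5 * Real.exp 1) ^ ((1 : ℝ) / 4)) ^ d ≤ (S.card : ℝ)) ∧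
    1 < 2 / (5 * Real.exp 1) ^ ((1 : ℝ) / 4) :=
  hamming_quarter_packing_general d
end
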